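/- arXiv:2409.09807 — 2 statements merged into one kernel-verified Lean document; each statement's English description precedes it below -/
import Mathlib

section
/- Let M be a multiplication meet irreducible R-module. Then the family B_M of coprime cosets m + N, where m ∈ M and N is a nonzero submodule with N + Rm = M, is the basis for a topology on M. -/
/-!
A coset `m + N` is coprime exactly when `N ≠ 0` and `N + Rx = M` for one (equivalently every)
point `x` of it, since `N + Rm` only depends on `m` modulo `N`. So if `x` lies in two coprime
cosets, they are `x + N₁` and `x + N₂`, and `x + (N₁ ∩ N₂)` is a coprime coset inside both:
`N₁ ∩ N₂ ≠ 0` by meet irreducibility, and writing `N₂ = I M = I N₁ + I (Rx) ⊆ (N₁ ∩ N₂) + Rx`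
gives `(N₁ ∩ N₂) + Rx ⊇ N₂ + Rx = M`.
-/

open Pointwise

namespace Submodule

variable {R M : Type*} [CommRing R] [AddCommGroup M] [Module R M]

theorem sup_span_singleton_eq_of_smodEq {N : Submodule R M} {x y : M} (h : x ≡ y [SMOD N]) :
    N ⊔ span R {x} = N ⊔ span R {y} := by
  have key : ∀ {x y : M}, x ≡ y [SMOD N] → N ⊔ span R {x} ≤ N ⊔ span R {y} := by
    intro x y h
    refine sup_le le_sup_left (span_singleton_le_iff_mem _ _ |>.mpr ?_)
    rw [← sub_add_cancel x y]
    exact add_mem (mem_sup_left (SModEq.sub_mem.mp h)) (mem_sup_right (mem_span_singleton_self y))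
  exact le_antisymm (key h) (key h.symm)

theorem inf_sup_eq_top_of_eq_smul_top {N₁ N₂ K : Submodule R M} {I : Ideal R}
    (hN₂ : N₂ = I • ⊤) (h₁ : N₁ ⊔ K = ⊤) (h₂ : N₂ ⊔ K = ⊤) : N₁ ⊓ N₂ ⊔ K = ⊤ := by
  have hN₂_le : N₂ ≤ N₁ ⊓ N₂ ⊔ K := by
    calc N₂ = I • N₁ ⊔ I • K := by rw [← smul_sup, h₁, hN₂]
      _ ≤ N₁ ⊓ N₂ ⊔ K := by
        refine sup_le_sup (le_inf smul_le_right ?_) smul_le_right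
        exact hN₂ ▸ smul_mono_right I le_top
  rw [eq_top_iff, ← h₂]
  exact sup_le hN₂_le le_sup_right

theorem mem_vadd_set_iff_smodEq {N : Submodule R M} {x m : M} :
    x ∈ m +ᵥ (N : Set M) ↔ x ≡ m [SMOD N] := by
  rw [Set.mem_vadd_set_iff_neg_vadd_mem, vadd_eq_add, neg_add_eq_sub, SModEq.sub_mem]
  rfl

end Submodule

section CoprimeCosets

open Submodule

variable (R M : Type*) [CommRing R] [AddCommGroup M] [Module R M]

def coprimeCosets : Set (Set M) :=
  {S | ∃ (m : M) (N : Submodule R M),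
    N ≠ ⊥ ∧ N ⊔ Submodule.span R {m} = ⊤ ∧ S = m +ᵥ (N : Set M)}

variable {R M}

theorem exists_mem_coprimeCosets_subset_inter
    (hmul : ∀ N : Submodule R M, ∃ I : Ideal R, N = I • (⊤ : Submodule R M))
    (hmi : ∀ K L : Submodule R M, K ≠ ⊥ → L ≠ ⊥ → K ⊓ L ≠ ⊥)
    {S₁ S₂ : Set M} (hS₁ : S₁ ∈ coprimeCosets R M) (hS₂ : S₂ ∈ coprimeCosets R M)
    {x : M} (hx : x ∈ S₁ ∩ S₂) :
    ∃ S ∈ coprimeCosets R M, x ∈ S ∧ S ⊆ S₁ ∩ S₂ := by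
  obtain ⟨m₁, N₁, hN₁, hc₁, rfl⟩ := hS₁
  obtain ⟨m₂, N₂, hN₂, hc₂, rfl⟩ := hS₂
  obtain ⟨hx₁, hx₂⟩ := hx
  rw [mem_vadd_set_iff_smodEq] at hx₁ hx₂
  rw [← sup_span_singleton_eq_of_smodEq hx₁] at hc₁
  rw [← sup_span_singleton_eq_of_smodEq hx₂] at hc₂
  obtain ⟨I₂, hI₂⟩ := hmul N₂
  refine ⟨x +ᵥ ((N₁ ⊓ N₂ : Submodule R M) : Set M),
    ⟨x, N₁ ⊓ N₂, hmi _ _ hN₁ hN₂, inf_sup_eq_top_of_eq_smul_top hI₂ hc₁ hc₂, rfl⟩,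
    mem_vadd_set_iff_smodEq.mpr SModEq.rfl, ?_⟩
  rw [← vadd_set_eq_vadd_set_iff.mpr hx₁, ← vadd_set_eq_vadd_set_iff.mpr hx₂]
  exact Set.subset_inter (Set.vadd_set_mono inf_le_left) (Set.vadd_set_mono inf_le_right)

theorem sUnion_coprimeCosets [Nontrivial M] : ⋃₀ coprimeCosets R M = Set.univ :=
  Set.eq_univ_of_univ_subset <|
    Set.subset_sUnion_of_mem ⟨0, ⊤, top_ne_bot, top_sup_eq _, by simp⟩

end CoprimeCosets

/-- If `M` is a multiplication meet irreducible module, then the family of coprime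
cosets is a basis for a topology on `M`. -/
theorem coprime_cosets_isBasis_of_multiplication
    {R M : Type*} [CommRing R] [AddCommGroup M] [Module R M] [Nontrivial M]
    (hmul : ∀ N : Submodule R M, ∃ I : Ideal R, N = I • (⊤ : Submodule R M))
    (hmi : ∀ K L : Submodule R M, K ≠ ⊥ → L ≠ ⊥ → K ⊓ L ≠ ⊥) :
    letI B : Set (Set M) := {S | ∃ (m : M) (N : Submodule R M),
      N ≠ ⊥ ∧ N ⊔ Submodule.span R {m} = ⊤ ∧ S = m +ᵥ (N : Set M)}
    @TopologicalSpace.IsTopologicalBasis M (TopologicalSpace.generateFrom B) B :=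
  @TopologicalSpace.IsTopologicalBasis.mk M (TopologicalSpace.generateFrom _) (coprimeCosets R M)
    (fun _ hS₁ _ hS₂ _ hx => exists_mem_coprimeCosets_subset_inter hmul hmi hS₁ hS₂ hx)
    sUnion_coprimeCosets rfl
end

section
/- Let M be a multiplication R-module with ann(M) prime, not simple, and suppose J(M) = 0. Then the Golomb space G(M) (the subspace M \ {0} of G̃(M)) is Hausdorff: for distinct nonzero m, n ∈ M there exists a maximal submodule P of M with m ∉ P, n ∉ P, and m − n ∉ P, so that m + P and n + P are disjoint basic open neighborhoods. -/
/-!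
For `x ≠ 0` the ideal `(Rx : M)` is not contained in the prime `ann M`, since in a multiplication
module `N ↦ (N : M)` reflects inclusions. Hence the finite intersection `I` of these ideals for
`x = m, n, m - n` is not contained in `ann M` either, i.e. `I M ≠ 0`. As `J(M) = 0`, some maximal
submodule `P` does not contain `I M`, and then `P` contains none of `m, n, m - n`. The cosets
`m + P` and `n + P` are disjoint, and they are basic open sets because `P ≠ 0` (`M` is not simple)
and `P + Rx = M` for `x ∉ P` by maximality.
-/

open Pointwise

namespace Submodule

def IsMultiplicationModule (R M : Type*) [CommSemiring R] [AddCommMonoid M] [Module R M] : Prop :=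
  ∀ N : Submodule R M, ∃ I : Ideal R, N = I • (⊤ : Submodule R M)

section CommSemiring

variable {R M : Type*} [CommSemiring R] [AddCommMonoid M] [Module R M]

theorem smul_top_le_iff_le_colon {I : Ideal R} {N : Submodule R M} :
    I • (⊤ : Submodule R M) ≤ N ↔ I ≤ N.colon Set.univ := by
  rw [smul_le, SetLike.le_def]
  simp [mem_colon]

theorem IsMultiplicationModule.colon_smul_top_eq (hM : IsMultiplicationModule R M)
    (N : Submodule R M) : N.colon Set.univ • (⊤ : Submodule R M) = N := by
  obtain ⟨I, rfl⟩ := hM N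
  exact le_antisymm (smul_top_le_iff_le_colon.2 le_rfl)
    (smul_mono_left (smul_top_le_iff_le_colon.1 le_rfl))

theorem IsMultiplicationModule.colon_le_colon_iff (hM : IsMultiplicationModule R M)
    {N N' : Submodule R M} : N.colon Set.univ ≤ N'.colon Set.univ ↔ N ≤ N' :=
  ⟨fun h ↦ hM.colon_smul_top_eq N ▸ smul_top_le_iff_le_colon.2 h,
    fun h ↦ colon_mono h subset_rfl⟩

theorem IsMultiplicationModule.colon_span_singleton_le_iff_mem (hM : IsMultiplicationModule R M)
    {x : M} {N : Submodule R M} :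
    (span R {x}).colon Set.univ ≤ N.colon Set.univ ↔ x ∈ N := by
  rw [hM.colon_le_colon_iff, span_singleton_le_iff_mem]

theorem IsMultiplicationModule.exists_isCoatom_forall_notMem (hM : IsMultiplicationModule R M)
    (hp : ((⊥ : Submodule R M).colon Set.univ).IsPrime)
    (hJ : sInf {P : Submodule R M | IsCoatom P} = ⊥) {s : Finset M} (hs : (0 : M) ∉ s) :
    ∃ P : Submodule R M, IsCoatom P ∧ ∀ x ∈ s, x ∉ P := by
  set I : Ideal R := s.inf fun x ↦ (span R {x}).colon Set.univ
  have hI : ¬ I ≤ (⊥ : Submodule R M).colon Set.univ := by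
    rw [hp.inf_le']
    rintro ⟨x, hx, hle⟩
    rw [hM.colon_span_singleton_le_iff_mem, mem_bot] at hle
    exact hs (hle ▸ hx)
  obtain ⟨P, hP, hIP⟩ : ∃ P ∈ {P : Submodule R M | IsCoatom P}, ¬ I • ⊤ ≤ P := by
    by_contra! h
    exact hI (smul_top_le_iff_le_colon.1 (hJ ▸ le_sInf h))
  refine ⟨P, hP, fun x hx hxP ↦ hIP (smul_top_le_iff_le_colon.2 ?_)⟩
  exact (Finset.inf_le hx).trans (hM.colon_span_singleton_le_iff_mem.2 hxP)

end CommSemiring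

section Ring

variable {R M : Type*} [Ring R] [AddCommGroup M] [Module R M]

theorem vadd_coe_inter_vadd_coe_eq_empty {P : Submodule R M} {m n : M} (h : m - n ∉ P) :
    (m +ᵥ (P : Set M)) ∩ (n +ᵥ (P : Set M)) = ∅ := by
  refine Set.eq_empty_of_forall_notMem fun a ⟨ham, han⟩ ↦ h ?_
  rw [Set.mem_vadd_set_iff_neg_vadd_mem, vadd_eq_add, SetLike.mem_coe] at ham han
  convert sub_mem han ham using 1
  abel

/-- The basis `B_M` of the topology `G̃(M)`. -/
def golombBasis (R M : Type*) [Ring R] [AddCommGroup M] [Module R M] : Set (Set M) :=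
  {S | ∃ (x : M) (N : Submodule R M),
    N ≠ ⊥ ∧ N ⊔ span R {x} = ⊤ ∧ S = x +ᵥ (N : Set M)}

theorem vadd_coe_mem_golombBasis {P : Submodule R M} (hP : IsCoatom P) (hP₀ : P ≠ ⊥) {x : M}
    (hx : x ∉ P) : x +ᵥ (P : Set M) ∈ golombBasis R M := by
  refine ⟨x, P, hP₀, ?_, rfl⟩
  rwa [← codisjoint_iff, ← hP.not_le_iff_codisjoint, span_singleton_le_iff_mem]

theorem ne_bot_of_isCoatom (hM : ¬ IsSimpleModule R M) {P : Submodule R M} (hP : IsCoatom P) :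
    P ≠ ⊥ := by
  rintro rfl
  exact hM ((isSimpleModule_iff R M).2 (isSimpleOrder_iff_isCoatom_bot.2 hP))

end Ring

end Submodule

open Submodule in
theorem golomb_hausdorff_of_jacobson_bot_general
    {R M : Type*} [CommRing R] [AddCommGroup M] [Module R M]
    (hmul : ∀ N : Submodule R M, ∃ I : Ideal R, N = I • (⊤ : Submodule R M))
    (hp : ((⊥ : Submodule R M).colon ⊤).IsPrime)
    (hns : ¬ IsSimpleModule R M)
    (hJ : sInf {P : Submodule R M | IsCoatom P} = ⊥) :
    letI B : Set (Set M) := {S | ∃ (x : M) (N : Submodule R M),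
      N ≠ ⊥ ∧ N ⊔ Submodule.span R {x} = ⊤ ∧ S = x +ᵥ (N : Set M)}
    letI t : TopologicalSpace M := TopologicalSpace.generateFrom B
    (∀ m n : M, m ≠ 0 → n ≠ 0 → m ≠ n →
      ∃ P : Submodule R M, IsCoatom P ∧ m ∉ P ∧ n ∉ P ∧ m - n ∉ P ∧
        (m +ᵥ (P : Set M)) ∩ (n +ᵥ (P : Set M)) = ∅) ∧
    @T2Space {x : M // x ≠ 0} (t.induced Subtype.val) := by
  classical
  have sep : ∀ m n : M, m ≠ 0 → n ≠ 0 → m ≠ n →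
      ∃ P : Submodule R M, IsCoatom P ∧ m ∉ P ∧ n ∉ P ∧ m - n ∉ P ∧
        (m +ᵥ (P : Set M)) ∩ (n +ᵥ (P : Set M)) = ∅ := by
    intro m n hm hn hmn
    have h0 : (0 : M) ∉ ({m, n, m - n} : Finset M) := by
      simp [hm.symm, hn.symm, (sub_ne_zero.2 hmn).symm]
    obtain ⟨P, hP, hs⟩ := IsMultiplicationModule.exists_isCoatom_forall_notMem hmul hp hJ h0
    have hd := hs (m - n) (by simp)
    exact ⟨P, hP, hs m (by simp), hs n (by simp), hd, vadd_coe_inter_vadd_coe_eq_empty hd⟩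
  let _ : TopologicalSpace M := .generateFrom (golombBasis R M)
  refine ⟨sep, ⟨?_⟩⟩
  rintro ⟨m, hm⟩ ⟨n, hn⟩ hne
  obtain ⟨P, hP, hmP, hnP, -, hdisj⟩ := sep m n hm hn (Subtype.coe_injective.ne hne)
  have hopen {x : M} (hx : x ∉ P) : IsOpen (x +ᵥ (P : Set M)) :=
    TopologicalSpace.isOpen_generateFrom_of_mem
      (vadd_coe_mem_golombBasis hP (ne_bot_of_isCoatom hns hP) hx)
  have hself (x : M) : x ∈ x +ᵥ (P : Set M) := by
    simpa using Set.vadd_mem_vadd_set (a := x) P.zero_mem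
  refine ⟨_, _, isOpen_induced (hopen hmP), isOpen_induced (hopen hnP), hself m, hself n, ?_⟩
  rw [Set.disjoint_iff_inter_eq_empty, ← Set.preimage_inter, hdisj, Set.preimage_empty]

/-- If `M` is a non-simple multiplication module with prime annihilator and
`J(M) = 0`, then the Golomb space `G(M)` on `M \ {0}` is Hausdorff: for distinct
nonzero `m, n` there is a maximal submodule `P` avoiding `m`, `n` and `m - n`,
giving disjoint basic neighborhoods `m + P` and `n + P`. -/
theorem golomb_hausdorff_of_jacobson_bot
    {R M : Type*} [CommRing R] [AddCommGroup M] [Module R M] [Nontrivial M]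
    (hmul : ∀ N : Submodule R M, ∃ I : Ideal R, N = I • (⊤ : Submodule R M))
    (hp : ((⊥ : Submodule R M).colon ⊤).IsPrime)
    (hns : ¬ IsSimpleModule R M)
    (hJ : sInf {P : Submodule R M | IsCoatom P} = ⊥) :
    letI B : Set (Set M) := {S | ∃ (x : M) (N : Submodule R M),
      N ≠ ⊥ ∧ N ⊔ Submodule.span R {x} = ⊤ ∧ S = x +ᵥ (N : Set M)}
    letI t : TopologicalSpace M := TopologicalSpace.generateFrom B
    (∀ m n : M, m ≠ 0 → n ≠ 0 → m ≠ n →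
      ∃ P : Submodule R M, IsCoatom P ∧ m ∉ P ∧ n ∉ P ∧ m - n ∉ P ∧
        (m +ᵥ (P : Set M)) ∩ (n +ᵥ (P : Set M)) = ∅) ∧
    @T2Space {x : M // x ≠ 0} (t.induced Subtype.val) :=
  golomb_hausdorff_of_jacobson_bot_general hmul hp hns hJ
end
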